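/- arXiv:0911.2891 — 6 statements merged into one kernel-verified Lean document; each statement's English description precedes it below -/
import Mathlib

section
/- Generalized Borel–Cantelli lemma: Let (Ω, ℬ, μ) be a probability space and (X_n)_{n≥1} a sequence of ℬ-measurable sets. Suppose there exist a positive integer d and a constant c > 1 such that μ(X_m ∩ X_n) < c·μ(X_m)·μ(X_n) for every m ≥ 1 and every n ≥ m + d. Then: (i) if Σ_{n=1}^∞ μ(X_n) = ∞, then μ(limsup_{n→∞} X_n) ≥ 1/(4c); and (ii) with no constraint on μ(X_m ∩ X_n), if Σ_{n=1}^∞ μ(X_n) < ∞, then μ(limsup_{n→∞} X_n) = 0. -/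
/-!
Cauchy–Schwarz for the counting function `∑ i ∈ s, 1_{X i}` on its support `⋃ i ∈ s, X i` gives
the Chung–Erdős inequality `(∑ μ (X i))² ≤ μ (⋃ X i) · ∑∑ μ (X i ∩ X j)`. Pairs of indices closer
than `d` contribute at most `2d ∑ μ (X i)` to the double sum and all others at most
`c (∑ μ (X i))²`. Since the series diverges, beyond any `m` there is a block of indices with
`∑ μ (X i) ≥ 2d / c`, for which the double sum is at most `2c (∑ μ (X i))²`; hence every tail union
has measure at least `1 / (2c)`, and so does the limsup by continuity from above.
-/

open MeasureTheory Filter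
open scoped ENNReal

theorem ENNReal.sq_lintegral_mul_le {α : Type*} [MeasurableSpace α] (μ : Measure α)
    {f g : α → ℝ≥0∞} (hf : AEMeasurable f μ) (hg : AEMeasurable g μ) :
    (∫⁻ a, f a * g a ∂μ) ^ 2 ≤ (∫⁻ a, f a ^ 2 ∂μ) * ∫⁻ a, g a ^ 2 ∂μ := by
  have holder := ENNReal.lintegral_mul_le_Lp_mul_Lq μ Real.HolderConjugate.two_two hf hg
  simp only [Pi.mul_apply, ENNReal.rpow_two, one_div] at holder
  calc (∫⁻ a, f a * g a ∂μ) ^ 2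
      ≤ ((∫⁻ a, f a ^ 2 ∂μ) ^ (2⁻¹ : ℝ) * (∫⁻ a, g a ^ 2 ∂μ) ^ (2⁻¹ : ℝ)) ^ 2 :=
        pow_le_pow_left' holder 2
    _ = (∫⁻ a, f a ^ 2 ∂μ) * ∫⁻ a, g a ^ 2 ∂μ := by
        have hsqrt (x : ℝ≥0∞) : (x ^ (2⁻¹ : ℝ)) ^ 2 = x := by
          exact_mod_cast ENNReal.rpow_inv_natCast_pow two_ne_zero x
        rw [mul_pow, hsqrt, hsqrt]

section

variable {Ω ι : Type*} [MeasurableSpace Ω] (μ : Measure Ω)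

theorem sq_sum_measure_le_measure_biUnion_mul_sum_sum_inter {X : ι → Set Ω}
    (hX : ∀ i, MeasurableSet (X i)) (s : Finset ι) :
    (∑ i ∈ s, μ (X i)) ^ 2 ≤ μ (⋃ i ∈ s, X i) * ∑ i ∈ s, ∑ j ∈ s, μ (X i ∩ X j) := by
  set U := ⋃ i ∈ s, X i
  set g : Ω → ℝ≥0∞ := fun ω => ∑ i ∈ s, (X i).indicator 1 ω
  have hg : Measurable g := Finset.measurable_sum _ fun i _ => measurable_one.indicator (hX i)
  have hg_int : ∫⁻ ω in U, g ω ∂μ = ∑ i ∈ s, μ (X i) := by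
    rw [lintegral_finsetSum _ fun i _ => measurable_one.indicator (hX i)]
    refine Finset.sum_congr rfl fun i hi => ?_
    rw [lintegral_indicator_one (hX i), Measure.restrict_apply (hX i)]
    exact congrArg μ (Set.inter_eq_left.2 fun ω hω => Set.mem_iUnion₂.2 ⟨i, hi, hω⟩)
  have hg_sq : ∫⁻ ω, g ω ^ 2 ∂μ = ∑ i ∈ s, ∑ j ∈ s, μ (X i ∩ X j) := by
    have hg_sq_eq (ω : Ω) : g ω ^ 2 = ∑ i ∈ s, ∑ j ∈ s, (X i ∩ X j).indicator 1 ω := by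
      simp only [g, sq, Finset.sum_mul_sum, Set.inter_indicator_one, Pi.mul_apply]
    simp only [hg_sq_eq]
    rw [lintegral_finsetSum _ fun i _ => Finset.measurable_sum _ fun j _ =>
      measurable_one.indicator ((hX i).inter (hX j))]
    refine Finset.sum_congr rfl fun i _ => ?_
    rw [lintegral_finsetSum _ fun j _ => measurable_one.indicator ((hX i).inter (hX j))]
    simp only [lintegral_indicator_one ((hX i).inter (hX _))]
  calc (∑ i ∈ s, μ (X i)) ^ 2 = (∫⁻ ω in U, 1 * g ω ∂μ) ^ 2 := by simp only [one_mul, hg_int]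
    _ ≤ (∫⁻ ω in U, 1 ^ 2 ∂μ) * ∫⁻ ω in U, g ω ^ 2 ∂μ :=
        ENNReal.sq_lintegral_mul_le _ aemeasurable_const hg.aemeasurable
    _ ≤ μ U * ∑ i ∈ s, ∑ j ∈ s, μ (X i ∩ X j) := by
        rw [one_pow, setLIntegral_const, one_mul, ← hg_sq]
        gcongr
        exact Measure.restrict_le_self

theorem sum_sum_measure_inter_le (X : ℕ → Set Ω) (s : Finset ℕ) (d : ℕ) (C : ℝ≥0∞)
    (h : ∀ i ∈ s, ∀ j ∈ s, i + d ≤ j → μ (X i ∩ X j) ≤ C * μ (X i) * μ (X j)) :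
    ∑ i ∈ s, ∑ j ∈ s, μ (X i ∩ X j) ≤
      2 * d * ∑ i ∈ s, μ (X i) + C * (∑ i ∈ s, μ (X i)) ^ 2 := by
  have hpair : ∀ i ∈ s, ∀ j ∈ s, μ (X i ∩ X j) ≤
      (if i + d ≤ j ∨ j + d ≤ i then 0 else μ (X i)) + C * μ (X i) * μ (X j) := by
    intro i hi j hj
    split_ifs with hfar
    · rw [zero_add]
      rcases hfar with hij | hji
      · exact h i hi j hj hij
      · rw [Set.inter_comm, mul_right_comm]
        exact h j hj i hi hji
    · exact le_add_right (measure_mono Set.inter_subset_left)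
  have hnear : ∀ i, ∑ j ∈ s, (if i + d ≤ j ∨ j + d ≤ i then 0 else μ (X i)) ≤ 2 * d * μ (X i) := by
    intro i
    rw [Finset.sum_ite, Finset.sum_const_zero, zero_add, Finset.sum_const, nsmul_eq_mul]
    gcongr
    have hsub : s.filter (fun j => ¬(i + d ≤ j ∨ j + d ≤ i)) ⊆ Finset.Ico (i + 1 - d) (i + d) := by
      intro j hj
      simp only [Finset.mem_filter, Finset.mem_Ico] at hj ⊢
      omega
    exact_mod_cast (Finset.card_le_card hsub).trans (by simp only [Nat.card_Ico]; omega)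
  have hfar : ∑ i ∈ s, ∑ j ∈ s, C * μ (X i) * μ (X j) = C * (∑ i ∈ s, μ (X i)) ^ 2 := by
    rw [sq, Finset.sum_mul_sum, Finset.mul_sum]
    simp only [Finset.mul_sum, mul_assoc]
  calc ∑ i ∈ s, ∑ j ∈ s, μ (X i ∩ X j)
      ≤ ∑ i ∈ s, ∑ j ∈ s,
          ((if i + d ≤ j ∨ j + d ≤ i then 0 else μ (X i)) + C * μ (X i) * μ (X j)) :=
        Finset.sum_le_sum fun i hi => Finset.sum_le_sum fun j hj => hpair i hi j hj
    _ = ∑ i ∈ s, ∑ j ∈ s, (if i + d ≤ j ∨ j + d ≤ i then 0 else μ (X i)) +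
          C * (∑ i ∈ s, μ (X i)) ^ 2 := by
        simp only [Finset.sum_add_distrib, hfar]
    _ ≤ 2 * d * ∑ i ∈ s, μ (X i) + C * (∑ i ∈ s, μ (X i)) ^ 2 := by
        rw [Finset.mul_sum]
        gcongr with i
        exact hnear i

end

theorem ENNReal.exists_lt_sum_Ico_of_tsum_eq_top {f : ℕ → ℝ≥0∞} (hf : ∑' n, f n = ∞)
    (hfin : ∀ n, f n ≠ ∞) (m : ℕ) {B : ℝ≥0∞} (hB : B ≠ ∞) :
    ∃ n, B < ∑ i ∈ Finset.Ico m n, f i := by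
  have hhead : ∑ i ∈ Finset.range m, f i ≠ ∞ := ENNReal.sum_ne_top.2 fun i _ => hfin i
  have hlt : B + ∑ i ∈ Finset.range m, f i < ⨆ n, ∑ i ∈ Finset.range n, f i := by
    rw [← ENNReal.tsum_eq_iSup_nat, hf]
    exact ENNReal.add_lt_top.2 ⟨hB.lt_top, hhead.lt_top⟩
  obtain ⟨n, hn⟩ := lt_iSup_iff.1 hlt
  refine ⟨max m n, (ENNReal.add_lt_add_iff_right hhead).1 ?_⟩
  calc B + ∑ i ∈ Finset.range m, f i < ∑ i ∈ Finset.range n, f i := hn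
    _ ≤ ∑ i ∈ Finset.range (max m n), f i :=
        Finset.sum_le_sum_of_subset (Finset.range_mono (le_max_right m n))
    _ = ∑ i ∈ Finset.Ico m (max m n), f i + ∑ i ∈ Finset.range m, f i := by
        rw [← Finset.sum_range_add_sum_Ico _ (le_max_left m n), add_comm]

section

variable {Ω : Type*} [MeasurableSpace Ω] {μ : Measure Ω} [IsFiniteMeasure μ]

theorem le_measure_limsup_atTop {X : ℕ → Set Ω} (hX : ∀ n, MeasurableSet (X n)) {r : ℝ≥0∞}
    (h : ∀ m, r ≤ μ (⋃ n ≥ m, X n)) : r ≤ μ (limsup X atTop) := by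
  rw [limsup_eq_iInf_iSup_of_nat]
  change r ≤ μ (⋂ m, ⋃ n ≥ m, X n)
  have htail_anti : Antitone fun m => ⋃ n ≥ m, X n := fun a b hab =>
    Set.biUnion_mono (fun n hn => hab.trans hn) fun _ _ => le_rfl
  rw [htail_anti.measure_iInter
    (fun m => (MeasurableSet.biUnion (Set.to_countable _) fun n _ => hX n).nullMeasurableSet)
    ⟨0, measure_ne_top μ _⟩]
  exact le_iInf h

theorem inv_two_mul_le_measure_iUnion_ge {X : ℕ → Set Ω} (hX : ∀ n, MeasurableSet (X n))
    (hsum : ∑' n, μ (X n) = ∞) {d N : ℕ} {C : ℝ≥0∞} (hC₀ : C ≠ 0) (hC : C ≠ ∞)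
    (h : ∀ m n, N ≤ m → m + d ≤ n → μ (X m ∩ X n) ≤ C * μ (X m) * μ (X n)) (m : ℕ) :
    (2 * C)⁻¹ ≤ μ (⋃ n ≥ m, X n) := by
  obtain ⟨k, hk⟩ := ENNReal.exists_lt_sum_Ico_of_tsum_eq_top hsum (fun n => measure_ne_top μ _)
    (max m N) (B := 2 * d / C)
    (ENNReal.div_ne_top (ENNReal.mul_ne_top ENNReal.ofNat_ne_top (ENNReal.natCast_ne_top d)) hC₀)
  set s := Finset.Ico (max m N) k
  set S := ∑ i ∈ s, μ (X i)
  have hS₀ : S ≠ 0 := (zero_le.trans_lt hk).ne'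
  have hS : S ≠ ∞ := ENNReal.sum_ne_top.2 fun i _ => measure_ne_top μ _
  have hdS : 2 * d ≤ C * S := by
    rw [mul_comm C]
    exact (ENNReal.div_lt_iff (Or.inl hC₀) (Or.inl hC)).1 hk |>.le
  have hmem : ∀ i ∈ s, max m N ≤ i := fun i hi => (Finset.mem_Ico.1 hi).1
  have hsumsum : ∑ i ∈ s, ∑ j ∈ s, μ (X i ∩ X j) ≤ 2 * C * S ^ 2 := by
    refine (sum_sum_measure_inter_le μ X s d C fun i hi j _ hij =>
      h i j (le_of_max_le_right (hmem i hi)) hij).trans ?_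
    calc 2 * d * S + C * S ^ 2 ≤ C * S * S + C * S ^ 2 := by
          gcongr ?_ * _ + _
      _ = 2 * C * S ^ 2 := by ring
  have hU : 1 ≤ 2 * C * μ (⋃ i ∈ s, X i) := by
    refine (ENNReal.mul_le_mul_iff_left (pow_ne_zero 2 hS₀) (ENNReal.pow_ne_top hS)).1 ?_
    calc 1 * S ^ 2 ≤ μ (⋃ i ∈ s, X i) * (2 * C * S ^ 2) := by
          rw [one_mul]
          exact (sq_sum_measure_le_measure_biUnion_mul_sum_sum_inter μ hX s).trans (by gcongr)
      _ = 2 * C * μ (⋃ i ∈ s, X i) * S ^ 2 := by ring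
  calc (2 * C)⁻¹ ≤ μ (⋃ i ∈ s, X i) :=
        (ENNReal.inv_le_iff_le_mul (fun _ => mul_ne_zero two_ne_zero hC₀) fun h2C =>
          absurd h2C (ENNReal.mul_ne_top ENNReal.ofNat_ne_top hC)).2 hU
    _ ≤ μ (⋃ n ≥ m, X n) :=
        measure_mono <|
          Set.biUnion_mono (fun i hi => le_of_max_le_left (hmem i hi)) fun _ _ => le_rfl

end

theorem generalized_borel_cantelli_general {Ω : Type*} [MeasurableSpace Ω]
    (μ : Measure Ω) [IsProbabilityMeasure μ]
    (X : ℕ → Set Ω) (hmeas : ∀ n, MeasurableSet (X n))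
    (d : ℕ) (c : ℝ)
    (hindep : ∀ m n : ℕ, 1 ≤ m → m + d ≤ n →
      μ (X m ∩ X n) < ENNReal.ofReal c * μ (X m) * μ (X n)) :
    ((∑' n : ℕ, μ (X n)) = ⊤ →
      ENNReal.ofReal (1 / (4 * c)) ≤ μ (limsup X atTop)) ∧
    (∀ Y : ℕ → Set Ω, (∀ n, MeasurableSet (Y n)) →
      (∑' n : ℕ, μ (Y n)) ≠ ⊤ → μ (limsup Y atTop) = 0) := by
  refine ⟨fun hsum => ?_, fun Y _ hY => measure_limsup_atTop_eq_zero hY⟩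
  have hc : 0 < c := by
    by_contra! hc
    simpa [ENNReal.ofReal_eq_zero.2 hc] using hindep 1 (1 + d) le_rfl le_rfl
  calc ENNReal.ofReal (1 / (4 * c)) ≤ ENNReal.ofReal (2 * c)⁻¹ :=
        ENNReal.ofReal_le_ofReal (by rw [one_div]; gcongr; linarith)
    _ = (2 * ENNReal.ofReal c)⁻¹ := by
        rw [ENNReal.ofReal_inv_of_pos (by positivity), ENNReal.ofReal_mul zero_le_two,
          ENNReal.ofReal_ofNat]
    _ ≤ μ (limsup X atTop) :=
        le_measure_limsup_atTop hmeas fun m =>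
          inv_two_mul_le_measure_iUnion_ge hmeas hsum (ENNReal.ofReal_pos.2 hc).ne'
            ENNReal.ofReal_ne_top (fun m n hm hmn => (hindep m n hm hmn).le) m

/-- Generalized Borel–Cantelli lemma (pairwise almost independent events). -/
theorem generalized_borel_cantelli {Ω : Type*} [MeasurableSpace Ω]
    (μ : Measure Ω) [IsProbabilityMeasure μ]
    (X : ℕ → Set Ω) (hmeas : ∀ n, MeasurableSet (X n))
    (d : ℕ) (hd : 1 ≤ d) (c : ℝ) (hc : 1 < c)
    (hindep : ∀ m n : ℕ, 1 ≤ m → m + d ≤ n →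
      μ (X m ∩ X n) < ENNReal.ofReal c * μ (X m) * μ (X n)) :
    ((∑' n : ℕ, μ (X n)) = ⊤ →
      ENNReal.ofReal (1 / (4 * c)) ≤ μ (limsup X atTop)) ∧
    (∀ Y : ℕ → Set Ω, (∀ n, MeasurableSet (Y n)) →
      (∑' n : ℕ, μ (Y n)) ≠ ⊤ → μ (limsup Y atTop) = 0) :=
  generalized_borel_cantelli_general μ X hmeas d c hindep
end

section
/- Let (Ω, ℬ) be a measurable space equipped with two probability measures ℓ and ν, and let (Y^{(m)}_n)_{m≥1, n≥1} be a doubly indexed family of measurable sets. Suppose there exist a natural number N, a positive integer j, and real constants a > 1 and 0 < r < 1 such that for all m ≥ 1 and all n > N one has 1/(a·n^j) < ℓ(Y^{(m)}_n) < a/n^j and ν(Y^{(m)}_n) < r^n; and suppose further that the sets are pairwise almost independent for ℓ: there exists a constant c > 1 such that for all m₁ ≠ m₂ and all n₁, n₂ ≥ 1, ℓ(Y^{(m₁)}_{n₁} ∩ Y^{(m₂)}_{n₂}) < c·ℓ(Y^{(m₁)}_{n₁})·ℓ(Y^{(m₂)}_{n₂}). Then there exists a measurable set X ∈ ℬ such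 that ℓ(X) > 0 and ν(X) = 0. -/
/-!
At level `n`, let `Sₙ` be the union of the first `Mₙ ≈ nʲ / (2ca³)` sets `Y⁽ᵐ⁾ₙ`. The
Bonferroni inequality `ℓ(⋃ Aᵢ) ≥ ∑ ℓ(Aᵢ) - ∑_{i ≠ k} ℓ(Aᵢ ∩ Aₖ)`, with the overlaps controlled by
almost independence, bounds `ℓ(Sₙ)` below by `1 / (8ca⁴)`, while `ν(Sₙ) ≤ Mₙ rⁿ ≤ nʲ rⁿ` is
summable. So `X = limsup Sₙ` works: `ℓ(X) ≥ limsup ℓ(Sₙ) > 0` by continuity from above, and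
`ν(X) = 0` by Borel–Cantelli.
-/

open MeasureTheory Filter
open scoped Finset

section Bonferroni

variable {Ω ι : Type*} [MeasurableSpace Ω] (μ : Measure Ω) {A : ι → Set Ω}

theorem measureReal_biUnion_le_card_mul (s : Finset ι) {b : ℝ}
    (hb : ∀ i ∈ s, μ.real (A i) ≤ b) : μ.real (⋃ i ∈ s, A i) ≤ #s * b :=
  (measureReal_biUnion_finset_le s A).trans (by simpa using Finset.sum_le_card_nsmul s _ b hb)

variable [IsFiniteMeasure μ]

theorem sum_measureReal_le_measureReal_biUnion_add_sum_inter [DecidableEq ι]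
    (hA : ∀ i, MeasurableSet (A i)) (s : Finset ι) :
    ∑ i ∈ s, μ.real (A i) ≤
      μ.real (⋃ i ∈ s, A i) + ∑ i ∈ s, ∑ k ∈ s.erase i, μ.real (A i ∩ A k) := by
  induction s using Finset.induction_on with
  | empty => simp
  | insert x s hx ih =>
    have hU : MeasurableSet (⋃ i ∈ s, A i) := s.measurableSet_biUnion fun i _ => hA i
    have hsplit := measureReal_union_add_inter (s := A x) hU (measure_ne_top μ _)
      (measure_ne_top μ _)
    have hcap : μ.real (A x ∩ ⋃ i ∈ s, A i) ≤ ∑ i ∈ s, μ.real (A x ∩ A i) := by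
      rw [Set.inter_iUnion₂]
      exact measureReal_biUnion_finset_le s _
    have hpairs : ∑ i ∈ s, μ.real (A x ∩ A i) + ∑ i ∈ s, ∑ k ∈ s.erase i, μ.real (A i ∩ A k)
        ≤ ∑ i ∈ insert x s, ∑ k ∈ (insert x s).erase i, μ.real (A i ∩ A k) := by
      rw [Finset.sum_insert hx, Finset.erase_insert hx]
      refine add_le_add_right (Finset.sum_le_sum fun i hi => ?_) _
      have hxi : x ≠ i := fun h => hx (h ▸ hi)
      rw [Finset.erase_insert_of_ne hxi, Finset.sum_insert fun h => hx (Finset.mem_of_mem_erase h)]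
      exact le_add_of_nonneg_left measureReal_nonneg
    rw [Finset.sum_insert hx, Finset.set_biUnion_insert]
    linarith

-- `hs` makes the overlap term of the Bonferroni inequality at most half of `#s * p`.
theorem card_mul_le_two_mul_measureReal_biUnion (hA : ∀ i, MeasurableSet (A i)) (s : Finset ι)
    {p u c : ℝ} (hc : 0 ≤ c) (hp : ∀ i ∈ s, p ≤ μ.real (A i)) (hu : ∀ i ∈ s, μ.real (A i) ≤ u)
    (hpair : ∀ i ∈ s, ∀ k ∈ s, i ≠ k → μ.real (A i ∩ A k) ≤ c * μ.real (A i) * μ.real (A k))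
    (hs : 2 * #s * c * u ^ 2 ≤ p) :
    #s * p ≤ 2 * μ.real (⋃ i ∈ s, A i) := by
  classical
  have hrow : ∀ i ∈ s, ∑ k ∈ s.erase i, μ.real (A i ∩ A k) ≤ #s * (c * u ^ 2) := by
    intro i hi
    calc ∑ k ∈ s.erase i, μ.real (A i ∩ A k) ≤ ∑ k ∈ s.erase i, c * u ^ 2 := by
          refine Finset.sum_le_sum fun k hk => (hpair i hi k (Finset.mem_of_mem_erase hk)
            (Finset.ne_of_mem_erase hk).symm).trans ?_
          have hu0 : 0 ≤ u := measureReal_nonneg.trans (hu i hi)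
          rw [mul_assoc, sq]
          gcongr
          exacts [hu i hi, hu k (Finset.mem_of_mem_erase hk)]
      _ ≤ #s * (c * u ^ 2) := by
          rw [Finset.sum_const, nsmul_eq_mul]
          exact mul_le_mul_of_nonneg_right (mod_cast Finset.card_erase_le) (by positivity)
  have hsum := sum_measureReal_le_measureReal_biUnion_add_sum_inter μ hA s
  have hlow : #s * p ≤ ∑ i ∈ s, μ.real (A i) := by
    simpa using Finset.card_nsmul_le_sum s _ p hp
  have hpairs : ∑ i ∈ s, ∑ k ∈ s.erase i, μ.real (A i ∩ A k) ≤ #s * (#s * (c * u ^ 2)) := by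
    simpa using Finset.sum_le_card_nsmul s _ _ hrow
  nlinarith [Nat.cast_nonneg (α := ℝ) #s]

theorem one_div_le_measureReal_biUnion (hA : ∀ i, MeasurableSet (A i)) (s : Finset ι)
    {P a c : ℝ} (hP : 0 < P) (ha : 0 < a)
    (hbounds : ∀ i ∈ s,
      ENNReal.ofReal (1 / (a * P)) < μ (A i) ∧ μ (A i) < ENNReal.ofReal (a / P))
    (hpair : ∀ i ∈ s, ∀ k ∈ s, i ≠ k →
      μ (A i ∩ A k) < ENNReal.ofReal c * μ (A i) * μ (A k))
    (hs : 2 * c * a ^ 3 * #s ≤ P) (hs' : P ≤ 4 * c * a ^ 3 * #s) :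
    1 / (8 * c * a ^ 4) ≤ μ.real (⋃ i ∈ s, A i) := by
  have hc : 0 < c := by
    by_contra! hc
    nlinarith [mul_nonneg (pow_pos ha 3).le (Nat.cast_nonneg (α := ℝ) #s)]
  have key := card_mul_le_two_mul_measureReal_biUnion μ hA s (p := 1 / (a * P)) (u := a / P)
    hc.le (fun i hi => ((ENNReal.ofReal_lt_iff_lt_toReal (by positivity) (measure_ne_top _ _)).1
      (hbounds i hi).1).le) (fun i hi => (ENNReal.toReal_lt_of_lt_ofReal (hbounds i hi).2).le)
    ?_ ?_
  · rw [mul_one_div, div_le_iff₀ (by positivity)] at key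
    have hP_le : 1 * P ≤ μ.real (⋃ i ∈ s, A i) * (8 * c * a ^ 4) * P := by
      nlinarith [mul_le_mul_of_nonneg_left key (by positivity : 0 ≤ 4 * c * a ^ 3)]
    rw [div_le_iff₀ (by positivity)]
    exact le_of_mul_le_mul_right hP_le hP
  · intro i hi k hk hik
    have h := hpair i hi k hk hik
    rw [← ofReal_measureReal (μ := μ) (s := A i), ← ofReal_measureReal (μ := μ) (s := A k),
      ← ENNReal.ofReal_mul hc.le, ← ENNReal.ofReal_mul (by positivity)] at h
    exact (ENNReal.toReal_lt_of_lt_ofReal h).le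
  · calc 2 * (#s : ℝ) * c * (a / P) ^ 2 = 2 * c * a ^ 3 * #s / (a * (P * P)) := by
          field_simp
      _ ≤ P / (a * (P * P)) := by gcongr
      _ = 1 / (a * P) := by field_simp

end Bonferroni

theorem mul_floor_div_le {x K : ℝ} (hK : 0 < K) (hx : 0 ≤ x) : K * ⌊x / K⌋₊ ≤ x := by
  rw [← le_div_iff₀' hK]
  exact Nat.floor_le (by positivity)

theorem lt_two_mul_mul_floor_div {x K : ℝ} (hK : 0 < K) (hKx : K ≤ x) :
    x < 2 * K * ⌊x / K⌋₊ := by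
  have h := Nat.div_two_lt_floor ((one_le_div₀ hK).2 hKx)
  rw [div_div, div_lt_iff₀ (by positivity)] at h
  exact h.trans_eq (by ring)

section SingularSet

variable {Ω : Type*} [MeasurableSpace Ω]

theorem le_measure_limsup_atTop_of_frequently_le {μ : Measure Ω} [IsFiniteMeasure μ]
    {S : ℕ → Set Ω} (hS : ∀ n, MeasurableSet (S n)) {δ : ENNReal}
    (h : ∃ᶠ n in atTop, δ ≤ μ (S n)) : δ ≤ μ (limsup S atTop) := by
  have htail : Antitone fun K => ⋃ n ≥ K, S n := fun K L hKL =>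
    Set.biUnion_mono (fun n hn => le_trans hKL hn) fun _ _ => le_rfl
  rw [limsup_eq_iInf_iSup_of_nat]
  simp only [Set.iInf_eq_iInter, Set.iSup_eq_iUnion]
  rw [htail.measure_iInter
    (fun K => (MeasurableSet.biUnion (Set.to_countable _) fun n _ => hS n).nullMeasurableSet)
    ⟨0, measure_ne_top μ _⟩]
  refine le_iInf fun K => ?_
  obtain ⟨n, hKn, hn⟩ := (frequently_atTop.1 h) K
  exact hn.trans (measure_mono (Set.subset_biUnion_of_mem (u := S) hKn))

theorem exists_measurableSet_measure_pos_measure_eq_zero {ℓ ν : Measure Ω} [IsFiniteMeasure ℓ]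
    [IsFiniteMeasure ν] {S : ℕ → Set Ω} (hS : ∀ n, MeasurableSet (S n)) {δ : ℝ} (hδ : 0 < δ)
    (hℓ : ∀ᶠ n in atTop, δ ≤ ℓ.real (S n)) (hν : Summable fun n => ν.real (S n)) :
    ∃ X, MeasurableSet X ∧ 0 < ℓ X ∧ ν X = 0 := by
  refine ⟨limsup S atTop, .measurableSet_limsup hS, ?_, measure_limsup_atTop_eq_zero ?_⟩
  · refine (ENNReal.ofReal_pos.2 hδ).trans_le (le_measure_limsup_atTop_of_frequently_le hS ?_)
    refine (hℓ.mono fun n hn => ?_).frequently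
    rw [← ofReal_measureReal (measure_ne_top ℓ _)]
    exact ENNReal.ofReal_le_ofReal hn
  · simp_rw [← ofReal_measureReal (measure_ne_top ν _)]
    rw [← ENNReal.ofReal_tsum_of_nonneg (fun n => measureReal_nonneg) hν]
    exact ENNReal.ofReal_ne_top

theorem summable_measureReal_biUnion_of_card_le_pow {ι : Type*} {μ : Measure Ω}
    [IsFiniteMeasure μ] {A : ι → ℕ → Set Ω} {s : ℕ → Finset ι} {j : ℕ} {r : ℝ} (hr0 : 0 ≤ r)
    (hr1 : r < 1)
    (h : ∀ᶠ n in atTop, #(s n) ≤ n ^ j ∧ ∀ i ∈ s n, μ (A i n) < ENNReal.ofReal (r ^ n)) :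
    Summable fun n => μ.real (⋃ i ∈ s n, A i n) := by
  refine (summable_pow_mul_geometric_of_norm_lt_one j
    (by rwa [Real.norm_of_nonneg hr0])).of_norm_bounded_eventually_nat ?_
  filter_upwards [h] with n ⟨hcard, hA⟩
  rw [Real.norm_of_nonneg measureReal_nonneg]
  calc μ.real (⋃ i ∈ s n, A i n) ≤ #(s n) * r ^ n :=
        measureReal_biUnion_le_card_mul μ _ fun i hi =>
          (ENNReal.toReal_lt_of_lt_ofReal (hA i hi)).le
    _ ≤ n ^ j * r ^ n := by gcongr; exact_mod_cast hcard

end SingularSet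

/-- Doubly indexed Borel–Cantelli setup: polynomial lower/upper bounds for `ℓ`,
exponential decay for `ν`, and pairwise almost independence for `ℓ`, produce a
measurable set of positive `ℓ`-measure and zero `ν`-measure. -/
theorem singular_set_from_doubly_indexed_sequence {Ω : Type*} [MeasurableSpace Ω]
    (ℓ ν : Measure Ω) [IsProbabilityMeasure ℓ] [IsProbabilityMeasure ν]
    (Y : ℕ → ℕ → Set Ω) (hmeas : ∀ m n, MeasurableSet (Y m n))
    (N : ℕ) (j : ℕ) (hj : 1 ≤ j) (a : ℝ) (ha : 1 < a) (r : ℝ) (hr0 : 0 < r) (hr1 : r < 1)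
    (hℓ : ∀ m n : ℕ, 1 ≤ m → N < n →
      ENNReal.ofReal (1 / (a * (n : ℝ) ^ j)) < ℓ (Y m n) ∧
      ℓ (Y m n) < ENNReal.ofReal (a / (n : ℝ) ^ j))
    (hν : ∀ m n : ℕ, 1 ≤ m → N < n → ν (Y m n) < ENNReal.ofReal (r ^ n))
    (c : ℝ) (hc : 1 < c)
    (hindep : ∀ m₁ m₂ n₁ n₂ : ℕ, m₁ ≠ m₂ → 1 ≤ m₁ → 1 ≤ m₂ → 1 ≤ n₁ → 1 ≤ n₂ →
      ℓ (Y m₁ n₁ ∩ Y m₂ n₂) < ENNReal.ofReal c * ℓ (Y m₁ n₁) * ℓ (Y m₂ n₂)) :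
    ∃ X : Set Ω, MeasurableSet X ∧ 0 < ℓ X ∧ ν X = 0 := by
  set K : ℝ := 2 * c * a ^ 3
  have hK1 : 1 ≤ K := by nlinarith [one_le_pow₀ (n := 3) ha.le]
  set M : ℕ → ℕ := fun n => ⌊(n : ℝ) ^ j / K⌋₊
  have hlarge : ∀ᶠ n : ℕ in atTop, N < n ∧ 1 ≤ n ∧ K ≤ (n : ℝ) ^ j :=
    (eventually_gt_atTop N).and <| (eventually_ge_atTop 1).and <|
      ((tendsto_pow_atTop (by omega)).comp tendsto_natCast_atTop_atTop).eventually_ge_atTop K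
  refine exists_measurableSet_measure_pos_measure_eq_zero
    (S := fun n => ⋃ m ∈ Finset.Icc 1 (M n), Y m n)
    (fun n => Finset.measurableSet_biUnion _ fun m _ => hmeas m n) (δ := 1 / (8 * c * a ^ 4))
    (by positivity) ?_ ?_
  · filter_upwards [hlarge] with n ⟨hNn, hn1, hKn⟩
    refine one_div_le_measureReal_biUnion ℓ (hmeas · n) _ (by positivity) (by positivity)
      (fun m hm => hℓ m n (Finset.mem_Icc.1 hm).1 hNn)
      (fun m hm k hk hmk => hindep m k n n hmk (Finset.mem_Icc.1 hm).1 (Finset.mem_Icc.1 hk).1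
        hn1 hn1) ?_ ?_ <;> rw [Nat.card_Icc, add_tsub_cancel_right]
    · exact mul_floor_div_le (by positivity) (by positivity)
    · linarith [lt_two_mul_mul_floor_div (by positivity) hKn]
  · refine summable_measureReal_biUnion_of_card_le_pow (j := j) hr0.le hr1 <| hlarge.mono
      fun n ⟨hNn, _, hKn⟩ => ⟨?_, fun m hm => hν m n (Finset.mem_Icc.1 hm).1 hNn⟩
    rw [Nat.card_Icc, add_tsub_cancel_right, ← Nat.cast_le (α := ℝ), Nat.cast_pow]
    have hKM : K * M n ≤ (n : ℝ) ^ j := mul_floor_div_le (by positivity) (by positivity)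
    nlinarith [Nat.cast_nonneg (α := ℝ) (M n)]
end

section
/- Let R = [[1,0],[1,1]] and L = [[1,1],[0,1]] be 2×2 integer matrices, and for a 2×2 matrix Q with nonnegative entries let |Q(i)| denote the sum of the entries of its i-th column. Then: (i) for every k ≥ 1 and all positive integers a₁, …, a_{2k−1}, the matrix Q = R^{a₁}·L^{a₂}·R^{a₃}·⋯·R^{a_{2k−1}}·L satisfies 1/2 < |Q(1)|/|Q(2)| < 2; and (ii) for every k ≥ 1 and all positive integers a₁, …, a_{2k}, the matrix Q′ = R^{a₁}·L^{a₂}·⋯·L^{a_{2k}}·R satisfies 1/2 < |Q′(1)|/|Q′(2)| < 2. In other words, every stage of a continued-fraction splitting sequence at which one switches between the letters R and L is 2-distributed. -/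
/-- The elementary matrix `R` encoding the split where band 2 splits band 1. -/
def Rmat : Matrix (Fin 2) (Fin 2) ℝ := !![1, 0; 1, 1]

/-- The elementary matrix `L` encoding the split where band 1 splits band 2. -/
def Lmat : Matrix (Fin 2) (Fin 2) ℝ := !![1, 1; 0, 1]

/-- Sum of the entries of the `j`-th column of a 2×2 matrix. -/
def colSum (Q : Matrix (Fin 2) (Fin 2) ℝ) (j : Fin 2) : ℝ := ∑ i, Q i j

/-- The alternating product `R^{a₁} · L^{a₂} · R^{a₃} · ⋯` of length `m`. -/
def altProd (m : ℕ) (a : Fin m → ℕ) : Matrix (Fin 2) (Fin 2) ℝ :=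
  (List.ofFn fun i : Fin m => (if (i : ℕ) % 2 = 0 then Rmat else Lmat) ^ (a i)).prod

lemma Rmat_pow (a : ℕ) : Rmat ^ a = !![1, 0; (a : ℝ), 1] := by
  induction a with
  | zero => simp [Matrix.one_fin_two]
  | succ n ih =>
    rw [pow_succ, ih, Rmat]
    ext i j
    fin_cases i <;> fin_cases j <;>
      simp [Matrix.mul_apply, Fin.sum_univ_two] <;> push_cast <;> ring

lemma Lmat_pow (a : ℕ) : Lmat ^ a = !![1, (a : ℝ); 0, 1] := by
  induction a with
  | zero => simp [Matrix.one_fin_two]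
  | succ n ih =>
    rw [pow_succ, ih, Lmat]
    ext i j
    fin_cases i <;> fin_cases j <;>
      simp [Matrix.mul_apply, Fin.sum_univ_two] <;> push_cast <;> ring

lemma colSum_mul_R (Q : Matrix (Fin 2) (Fin 2) ℝ) (a : ℕ) :
    colSum (Q * Rmat ^ a) 0 = colSum Q 0 + (a : ℝ) * colSum Q 1 ∧
    colSum (Q * Rmat ^ a) 1 = colSum Q 1 := by
  rw [Rmat_pow]
  constructor <;> simp [colSum, Matrix.mul_apply, Fin.sum_univ_two] <;> ring

lemma colSum_mul_L (Q : Matrix (Fin 2) (Fin 2) ℝ) (a : ℕ) :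
    colSum (Q * Lmat ^ a) 0 = colSum Q 0 ∧
    colSum (Q * Lmat ^ a) 1 = (a : ℝ) * colSum Q 0 + colSum Q 1 := by
  rw [Lmat_pow]
  constructor <;> simp [colSum, Matrix.mul_apply, Fin.sum_univ_two] <;> ring

lemma altProd_succ (m : ℕ) (a : Fin (m + 1) → ℕ) :
    altProd (m + 1) a = altProd m (fun i => a i.castSucc) *
      (if m % 2 = 0 then Rmat else Lmat) ^ (a (Fin.last m)) := by
  unfold altProd
  rw [List.ofFn_succ', List.concat_eq_append, List.prod_append, List.prod_singleton]
  simp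

lemma key (m : ℕ) (a : Fin m → ℕ) (ha : ∀ i, 1 ≤ a i) :
    0 < colSum (altProd m a) 0 ∧ 0 < colSum (altProd m a) 1 ∧
    (m % 2 = 1 → colSum (altProd m a) 1 < colSum (altProd m a) 0) ∧
    (m % 2 = 0 → 1 ≤ m → colSum (altProd m a) 0 < colSum (altProd m a) 1) := by
  induction m with
  | zero =>
    simp [altProd, colSum, Matrix.one_apply, Fin.sum_univ_two]
  | succ n ih =>
    obtain ⟨h0, h1, hodd, heven⟩ := ih (fun i => a i.castSucc) (fun i => ha _)
    rw [altProd_succ]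
    have hA : 1 ≤ a (Fin.last n) := ha _
    have hA' : (1 : ℝ) ≤ (a (Fin.last n) : ℝ) := by exact_mod_cast hA
    rcases Nat.even_or_odd n with he | ho
    · have hn : n % 2 = 0 := Nat.even_iff.mp he
      rw [if_pos hn]
      obtain ⟨e0, e1⟩ := colSum_mul_R (altProd n fun i => a i.castSucc) (a (Fin.last n))
      have ht : colSum (altProd n fun i => a i.castSucc) 1 ≤
          (a (Fin.last n) : ℝ) * colSum (altProd n fun i => a i.castSucc) 1 :=
        le_mul_of_one_le_left h1.le hA'
      refine ⟨by rw [e0]; nlinarith, by rw [e1]; exact h1, fun _ => by rw [e0, e1]; linarith,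
        fun h _ => by omega⟩
    · have hn : n % 2 = 1 := Nat.odd_iff.mp ho
      rw [if_neg (by omega)]
      obtain ⟨e0, e1⟩ := colSum_mul_L (altProd n fun i => a i.castSucc) (a (Fin.last n))
      have hs : colSum (altProd n fun i => a i.castSucc) 0 ≤
          (a (Fin.last n) : ℝ) * colSum (altProd n fun i => a i.castSucc) 0 :=
        le_mul_of_one_le_left h0.le hA'
      refine ⟨by rw [e0]; exact h0, by rw [e1]; nlinarith, fun h => by omega,
        fun _ _ => by rw [e0, e1]; linarith⟩

/-- Every stage of the continued-fraction splitting sequence at which one switches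
between the letters `R` and `L` (or vice versa) is 2-distributed: the ratio of
the column sums lies strictly between 1/2 and 2. -/
theorem switch_stage_two_distributed (k : ℕ) (hk : 1 ≤ k) :
    (∀ a : Fin (2 * k - 1) → ℕ, (∀ i, 1 ≤ a i) →
      1 / 2 < colSum (altProd (2 * k - 1) a * Lmat) 0 / colSum (altProd (2 * k - 1) a * Lmat) 1 ∧
      colSum (altProd (2 * k - 1) a * Lmat) 0 / colSum (altProd (2 * k - 1) a * Lmat) 1 < 2) ∧
    (∀ a : Fin (2 * k) → ℕ, (∀ i, 1 ≤ a i) →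
      1 / 2 < colSum (altProd (2 * k) a * Rmat) 0 / colSum (altProd (2 * k) a * Rmat) 1 ∧
      colSum (altProd (2 * k) a * Rmat) 0 / colSum (altProd (2 * k) a * Rmat) 1 < 2) := by
  constructor
  · intro a ha
    obtain ⟨h0, h1, hodd, _⟩ := key (2 * k - 1) a ha
    have hlt := hodd (by omega)
    obtain ⟨e0, e1⟩ := colSum_mul_L (altProd (2 * k - 1) a) 1
    rw [pow_one] at e0 e1
    rw [e0, e1]
    push_cast at e1 ⊢
    constructor
    · rw [lt_div_iff₀ (by linarith)]; linarith
    · rw [div_lt_iff₀ (by linarith)]; linarith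
  · intro a ha
    obtain ⟨h0, h1, _, heven⟩ := key (2 * k) a ha
    have hlt := heven (by omega) (by omega)
    obtain ⟨e0, e1⟩ := colSum_mul_R (altProd (2 * k) a) 1
    rw [pow_one] at e0 e1
    rw [e0, e1]
    push_cast at e0 ⊢
    constructor
    · rw [lt_div_iff₀ (by linarith)]; linarith
    · rw [div_lt_iff₀ (by linarith)]; linarith
end

section
/- There exists a constant c > 1 such that for all odd integers m, n with 1 ≤ m < n, one has ℓ(X_{m,m} ∩ X_{n,n}) < c·ℓ(X_{m,m})·ℓ(X_{n,n}); that is, the sets X_{n,n} (n odd) are pairwise almost independent with respect to Lebesgue measure. -/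
open MeasureTheory

/-- The Gauss map `G(x) = 1/x - ⌊1/x⌋`. -/
noncomputable def gaussMap (x : ℝ) : ℝ := Int.fract x⁻¹

/-- The `m`-th continued fraction digit `a_m(x) = ⌊1 / G^{m-1}(x)⌋` (for `m ≥ 1`). -/
noncomputable def cfDigit (m : ℕ) (x : ℝ) : ℤ := ⌊(gaussMap^[m - 1] x)⁻¹⌋

/-- `X_{m,n}`: the set of irrational `x ∈ (0,1)` whose `m`-th continued fraction
digit exceeds `n`. -/
def cfSet (m n : ℕ) : Set ℝ :=
  {x | x ∈ Set.Ioo (0 : ℝ) 1 ∧ Irrational x ∧ (n : ℤ) < cfDigit m x}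

/-!
The Gauss measure `dx / (1 + x)` is invariant under `G` and lies within a factor `2` of
Lebesgue measure on `(0, 1]`. The first digit exceeds `k` exactly on `(0, 1/(k+1)]`, so by
invariance `ℓ(X_{m,k}) ≥ 1/(2(k+1))`. Above a set `E`, the part of `G⁻¹(E)` with first digit
`> k` is the disjoint union of the images of `E` under the inverse branches `t ↦ 1/(d+t)`,
`d > k`; by the change of variables formula its Gauss measure is
`∫_E Σ_{d>k} dt / ((d+t)(d+t+1)) = ∫_E dt / (k+1+t) ≤ ℓ(E)/(k+1)`. Writing
`X_{m,k} ∩ X_{n,l}` as the `G^{m-1}`-preimage of `{a_1 > k} ∩ G⁻¹(G^{-(n-m-1)}{a_1 > l})`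
and applying invariance twice gives `ℓ(X_{m,k} ∩ X_{n,l}) ≤ 4/((k+1)(l+1))`, at most `16`
times the product of the measures.
-/

open Set Filter Topology ENNReal

theorem measurable_gaussMap : Measurable gaussMap :=
  measurable_fract.comp measurable_inv

theorem gaussMap_mem_Ico (x : ℝ) : gaussMap x ∈ Ico 0 1 :=
  ⟨Int.fract_nonneg _, Int.fract_lt_one _⟩

theorem setOf_lt_floor_inv_eq_Ioc (n : ℕ) :
    {y : ℝ | (n : ℤ) < ⌊y⁻¹⌋} = Ioc 0 ((n : ℝ) + 1)⁻¹ := by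
  ext y
  have hn : (0 : ℝ) < n + 1 := by positivity
  simp only [mem_ofPred_eq, mem_Ioc, Int.lt_iff_add_one_le, Int.le_floor]
  push_cast
  constructor
  · intro h
    have hy : 0 < y := inv_pos.1 (hn.trans_le h)
    exact ⟨hy, (le_inv_comm₀ hy hn).2 h⟩
  · rintro ⟨hy, h⟩
    exact (le_inv_comm₀ hn hy).2 h

theorem cfSet_eq_inter_preimage (m n : ℕ) :
    cfSet m n = Ioo 0 1 ∩ {x | Irrational x} ∩ gaussMap^[m - 1] ⁻¹' Ioc 0 ((n : ℝ) + 1)⁻¹ := by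
  rw [← setOf_lt_floor_inv_eq_Ioc]
  ext x
  simp only [cfSet, cfDigit, mem_inter_iff, mem_ofPred_eq, mem_preimage, and_assoc]

noncomputable def gaussBranch (d : ℕ) (t : ℝ) : ℝ := ((d : ℝ) + t)⁻¹

theorem image_gaussBranch {B : Set ℝ} (hB : B ⊆ Ico 0 1) (d : ℕ) :
    gaussBranch d '' B = {x | ⌊x⁻¹⌋ = d ∧ gaussMap x ∈ B} := by
  ext x
  constructor
  · rintro ⟨t, ht, rfl⟩
    have hfract : Int.fract ((d : ℝ) + t) = t := by
      rw [add_comm, Int.fract_add_natCast, Int.fract_eq_self.2 (hB ht)]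
    refine ⟨?_, ?_⟩
    · obtain ⟨ht0, ht1⟩ := hB ht
      rw [gaussBranch, inv_inv, Int.floor_eq_iff]
      push_cast
      constructor <;> linarith
    · rwa [gaussMap, gaussBranch, inv_inv, hfract]
  · rintro ⟨hfloor, hx⟩
    have hinv : x⁻¹ = d + gaussMap x := by
      rw [gaussMap, Int.fract, hfloor]
      push_cast; ring
    refine ⟨gaussMap x, hx, ?_⟩
    rw [gaussBranch, ← hinv, inv_inv]

theorem Ioc_inter_preimage_gaussMap_eq_iUnion {B : Set ℝ} (hB : B ⊆ Ico 0 1) (k : ℕ) :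
    Ioc 0 ((k : ℝ) + 1)⁻¹ ∩ gaussMap ⁻¹' B = ⋃ j : ℕ, gaussBranch (k + 1 + j) '' B := by
  simp only [image_gaussBranch hB, ← setOf_lt_floor_inv_eq_Ioc]
  ext x
  simp only [mem_inter_iff, mem_ofPred_eq, mem_preimage, mem_iUnion]
  constructor
  · rintro ⟨hk, hx⟩
    refine ⟨(⌊x⁻¹⌋ - (k + 1)).toNat, ?_, hx⟩
    push_cast
    omega
  · rintro ⟨j, hj, hx⟩
    exact ⟨by omega, hx⟩

theorem measurableSet_image_gaussBranch {B : Set ℝ} (hBm : MeasurableSet B) (hB : B ⊆ Ico 0 1)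
    (d : ℕ) : MeasurableSet (gaussBranch d '' B) := by
  rw [image_gaussBranch hB]
  exact (measurableSet_eq_fun (Int.measurable_floor.comp measurable_inv) measurable_const).inter
    (measurable_gaussMap hBm)

theorem pairwise_disjoint_image_gaussBranch {B : Set ℝ} (hB : B ⊆ Ico 0 1) :
    Pairwise (Function.onFun Disjoint fun d => gaussBranch d '' B) := by
  intro d e hde
  simp only [Function.onFun, image_gaussBranch hB]
  refine Set.disjoint_left.2 fun x hd he => hde ?_
  exact_mod_cast hd.1.symm.trans he.1

theorem lintegral_image_gaussBranch {B : Set ℝ} (hBm : MeasurableSet B) (hB : B ⊆ Ici 0)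
    {d : ℕ} (hd : 0 < d) :
    ∫⁻ x in gaussBranch d '' B, ENNReal.ofReal (1 + x)⁻¹
      = ∫⁻ t in B, ENNReal.ofReal (((d + t) * (d + t + 1))⁻¹) := by
  have hpos : ∀ t ∈ B, (0 : ℝ) < d + t := fun t ht =>
    add_pos_of_pos_of_nonneg (by exact_mod_cast hd) (hB ht)
  have hderiv : ∀ t ∈ B, HasDerivWithinAt (gaussBranch d) (-((d + t) ^ 2)⁻¹) B t := fun t ht =>
    (((hasDerivAt_id t).const_add (d : ℝ)).inv (hpos t ht).ne').hasDerivWithinAt.congr_deriv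
      (by rw [neg_div, one_div, id])
  have hinj : InjOn (gaussBranch d) B := fun s _ t _ h => by
    simpa [gaussBranch] using h
  rw [lintegral_image_eq_lintegral_abs_deriv_mul hBm hderiv hinj]
  refine setLIntegral_congr_fun hBm fun t ht => ?_
  have hdt := hpos t ht
  rw [← ENNReal.ofReal_mul (abs_nonneg _), gaussBranch, abs_neg, abs_of_pos (by positivity)]
  congr 1
  field_simp

theorem tsum_ofReal_inv_mul_add_one {a : ℝ} (ha : 0 < a) :
    ∑' j : ℕ, ENNReal.ofReal (((a + j) * (a + j + 1))⁻¹) = ENNReal.ofReal a⁻¹ := by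
  have hterm : ∀ j : ℕ, ((a + j) * (a + j + 1))⁻¹ = (a + j)⁻¹ - (a + (j + 1 : ℕ))⁻¹ := by
    intro j
    have : 0 < a + j := by positivity
    push_cast
    field_simp
    ring
  have hnonneg : ∀ j : ℕ, 0 ≤ ((a + j) * (a + j + 1))⁻¹ := fun j => by positivity
  have hsum : HasSum (fun j : ℕ => ((a + j) * (a + j + 1))⁻¹) a⁻¹ := by
    rw [hasSum_iff_tendsto_nat_of_nonneg hnonneg]
    simp only [hterm, Finset.sum_range_sub', Nat.cast_zero, add_zero]
    have : Tendsto (fun n : ℕ => (a + n)⁻¹) atTop (𝓝 0) :=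
      tendsto_inv_atTop_zero.comp (tendsto_atTop_add_const_left _ _ tendsto_natCast_atTop_atTop)
    simpa using tendsto_const_nhds.sub this
  rw [← ENNReal.ofReal_tsum_of_nonneg hnonneg hsum.summable, hsum.tsum_eq]

theorem lintegral_Ioc_inter_preimage_gaussMap {B : Set ℝ} (hBm : MeasurableSet B)
    (hB : B ⊆ Ico 0 1) (k : ℕ) :
    ∫⁻ x in Ioc 0 ((k : ℝ) + 1)⁻¹ ∩ gaussMap ⁻¹' B, ENNReal.ofReal (1 + x)⁻¹
      = ∫⁻ t in B, ENNReal.ofReal (k + 1 + t)⁻¹ := by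
  rw [Ioc_inter_preimage_gaussMap_eq_iUnion hB, lintegral_iUnion
    (fun j => measurableSet_image_gaussBranch hBm hB _)
    ((pairwise_disjoint_image_gaussBranch hB).comp_of_injective (add_right_injective _))]
  simp_rw [lintegral_image_gaussBranch hBm (hB.trans Ico_subset_Ici_self)
    (Nat.succ_pos _ |>.trans_le (Nat.le_add_right _ _))]
  rw [← lintegral_tsum fun j => by fun_prop]
  refine setLIntegral_congr_fun hBm fun t ht => ?_
  rw [← tsum_ofReal_inv_mul_add_one (by linarith [(hB ht).1] : (0 : ℝ) < k + 1 + t)]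
  congr! 3 with j
  push_cast
  ring

theorem preimage_gaussMap_inter_Ico (B : Set ℝ) : gaussMap ⁻¹' (B ∩ Ico 0 1) = gaussMap ⁻¹' B := by
  rw [preimage_inter, inter_eq_left]
  exact fun x _ => gaussMap_mem_Ico x

/-- The Gauss measure `dx / (1 + x)` on `(0, 1]`, left unnormalized (its total mass is `log 2`). -/
noncomputable def gaussMeasure : Measure ℝ :=
  (volume.restrict (Ioc 0 1)).withDensity fun x => ENNReal.ofReal (1 + x)⁻¹

theorem gaussMeasure_apply {s : Set ℝ} (hs : MeasurableSet s) :
    gaussMeasure s = ∫⁻ x in s ∩ Ioc 0 1, ENNReal.ofReal (1 + x)⁻¹ := by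
  rw [gaussMeasure, withDensity_apply _ hs, Measure.restrict_restrict hs]

theorem measurePreserving_gaussMap : MeasurePreserving gaussMap gaussMeasure gaussMeasure := by
  refine ⟨measurable_gaussMap, Measure.ext fun B hB => ?_⟩
  have hB' : MeasurableSet (B ∩ Ico 0 1) := hB.inter measurableSet_Ico
  rw [Measure.map_apply measurable_gaussMap hB, gaussMeasure_apply (measurable_gaussMap hB),
    gaussMeasure_apply hB, ← preimage_gaussMap_inter_Ico, inter_comm]
  calc ∫⁻ x in Ioc 0 1 ∩ gaussMap ⁻¹' (B ∩ Ico 0 1), ENNReal.ofReal (1 + x)⁻¹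
      = ∫⁻ t in B ∩ Ico 0 1, ENNReal.ofReal ((0 : ℕ) + 1 + t)⁻¹ := by
        simpa using lintegral_Ioc_inter_preimage_gaussMap hB' inter_subset_right 0
    _ = ∫⁻ t in B ∩ Ioc 0 1, ENNReal.ofReal (1 + t)⁻¹ := by
        rw [Measure.restrict_congr_set (ae_eq_refl B |>.inter Ico_ae_eq_Ioc)]
        simp

theorem gaussMeasure_le_volume_restrict : gaussMeasure ≤ volume.restrict (Ioc 0 1) := by
  conv_rhs => rw [← withDensity_one (μ := volume.restrict (Ioc 0 1))]
  refine withDensity_mono ((ae_restrict_iff' measurableSet_Ioc).2 (ae_of_all _ fun x hx => ?_))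
  simpa using inv_le_one_of_one_le₀ (by linarith [hx.1] : (1 : ℝ) ≤ 1 + x)

theorem volume_restrict_le_two_smul_gaussMeasure :
    volume.restrict (Ioc (0 : ℝ) 1) ≤ (2 : ℝ≥0∞) • gaussMeasure := by
  conv_lhs => rw [← withDensity_one (μ := volume.restrict (Ioc 0 1))]
  rw [gaussMeasure, ← withDensity_smul' _ _ ofNat_ne_top]
  refine withDensity_mono ((ae_restrict_iff' measurableSet_Ioc).2 (ae_of_all _ fun x hx => ?_))
  have : (2 : ℝ)⁻¹ ≤ (1 + x)⁻¹ := inv_anti₀ (by linarith [hx.1]) (by linarith [hx.2])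
  calc (1 : ℝ≥0∞) = 2 * ENNReal.ofReal 2⁻¹ := by
        rw [ENNReal.ofReal_inv_of_pos two_pos, ofReal_ofNat, ENNReal.mul_inv_cancel] <;> simp
    _ ≤ 2 * ENNReal.ofReal (1 + x)⁻¹ := by gcongr

theorem gaussMeasure_Ioc_inter_preimage_le {B : Set ℝ} (hB : MeasurableSet B) (k : ℕ) :
    gaussMeasure (Ioc 0 ((k : ℝ) + 1)⁻¹ ∩ gaussMap ⁻¹' B)
      ≤ ENNReal.ofReal ((k : ℝ) + 1)⁻¹ * volume.restrict (Ioc 0 1) B := by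
  have hB' : MeasurableSet (B ∩ Ico 0 1) := hB.inter measurableSet_Ico
  rw [gaussMeasure_apply (measurableSet_Ioc.inter (measurable_gaussMap hB)),
    Measure.restrict_apply hB, ← measure_congr (ae_eq_refl B |>.inter Ico_ae_eq_Ioc),
    ← setLIntegral_const, ← preimage_gaussMap_inter_Ico]
  calc _ ≤ ∫⁻ x in Ioc 0 ((k : ℝ) + 1)⁻¹ ∩ gaussMap ⁻¹' (B ∩ Ico 0 1), ENNReal.ofReal (1 + x)⁻¹ :=
        lintegral_mono_set inter_subset_left
    _ = ∫⁻ t in B ∩ Ico 0 1, ENNReal.ofReal (k + 1 + t)⁻¹ :=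
        lintegral_Ioc_inter_preimage_gaussMap hB' inter_subset_right k
    _ ≤ _ := setLIntegral_mono' hB' fun t ht =>
        ENNReal.ofReal_le_ofReal (inv_anti₀ (by positivity) (by linarith [ht.2.1]))

theorem volume_restrict_Ioc_inv (n : ℕ) :
    volume.restrict (Ioc 0 1) (Ioc 0 ((n : ℝ) + 1)⁻¹) = ENNReal.ofReal ((n : ℝ) + 1)⁻¹ := by
  have : ((n : ℝ) + 1)⁻¹ ≤ 1 := inv_le_one_of_one_le₀ (by simp)
  rw [Measure.restrict_apply measurableSet_Ioc, inter_eq_left.2 (Ioc_subset_Ioc_right this),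
    Real.volume_Ioc, sub_zero]

theorem volume_Ioo_inter_irrational_inter (T : Set ℝ) :
    volume (Ioo 0 1 ∩ {x | Irrational x} ∩ T) = volume.restrict (Ioc 0 1) T := by
  have hrat : volume {x : ℝ | Irrational x}ᶜ = 0 := by
    convert (countable_range ((↑) : ℚ → ℝ)).measure_zero volume
    ext x
    simp [Irrational]
  rw [inter_right_comm, measure_inter_conull hrat, Measure.restrict_apply' measurableSet_Ioc,
    inter_comm, measure_congr (ae_eq_refl T |>.inter Ioo_ae_eq_Ioc)]

theorem ofReal_inv_le_two_mul_volume_cfSet (m n : ℕ) :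
    ENNReal.ofReal ((n : ℝ) + 1)⁻¹ ≤ 2 * volume (cfSet m n) := by
  set A := Ioc (0 : ℝ) ((n : ℝ) + 1)⁻¹
  rw [cfSet_eq_inter_preimage, volume_Ioo_inter_irrational_inter]
  calc ENNReal.ofReal ((n : ℝ) + 1)⁻¹ = volume.restrict (Ioc 0 1) A :=
        (volume_restrict_Ioc_inv n).symm
    _ ≤ 2 * gaussMeasure A := volume_restrict_le_two_smul_gaussMeasure A
    _ = 2 * gaussMeasure (gaussMap^[m - 1] ⁻¹' A) := by
        rw [(measurePreserving_gaussMap.iterate _).measure_preimage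
          measurableSet_Ioc.nullMeasurableSet]
    _ ≤ 2 * volume.restrict (Ioc 0 1) (gaussMap^[m - 1] ⁻¹' A) := by
        gcongr
        exact gaussMeasure_le_volume_restrict

theorem volume_cfSet_ne_zero (m n : ℕ) : volume (cfSet m n) ≠ 0 := by
  intro h
  have h_le := ofReal_inv_le_two_mul_volume_cfSet m n
  rw [h, mul_zero, nonpos_iff_eq_zero, ENNReal.ofReal_eq_zero] at h_le
  exact (inv_pos.2 (by positivity : (0 : ℝ) < n + 1)).not_ge h_le

theorem volume_cfSet_ne_top (m n : ℕ) : volume (cfSet m n) ≠ ⊤ :=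
  ne_top_of_le_ne_top (by simp) (measure_mono fun x (hx : x ∈ cfSet m n) => hx.1)

theorem cfSet_inter_cfSet_eq {m n : ℕ} (hm : 1 ≤ m) (hmn : m < n) (k l : ℕ) :
    cfSet m k ∩ cfSet n l = Ioo 0 1 ∩ {x | Irrational x} ∩ gaussMap^[m - 1] ⁻¹'
      (Ioc 0 ((k : ℝ) + 1)⁻¹ ∩ gaussMap ⁻¹' (gaussMap^[n - m - 1] ⁻¹' Ioc 0 ((l : ℝ) + 1)⁻¹)) := by
  have hiter : gaussMap^[n - 1] = gaussMap^[n - m - 1] ∘ gaussMap ∘ gaussMap^[m - 1] := by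
    rw [← Function.comp_assoc, ← Function.iterate_succ, ← Function.iterate_add]
    congr 1
    omega
  rw [cfSet_eq_inter_preimage, cfSet_eq_inter_preimage, hiter]
  ext x
  simp only [mem_inter_iff, mem_preimage, Function.comp_apply]
  tauto

theorem volume_cfSet_inter_cfSet_le {m n : ℕ} (hm : 1 ≤ m) (hmn : m < n) (k l : ℕ) :
    volume (cfSet m k ∩ cfSet n l)
      ≤ 4 * ENNReal.ofReal ((k : ℝ) + 1)⁻¹ * ENNReal.ofReal ((l : ℝ) + 1)⁻¹ := by
  set A := Ioc (0 : ℝ) ((l : ℝ) + 1)⁻¹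
  set E := gaussMap^[n - m - 1] ⁻¹' A
  have hE : MeasurableSet E := (measurable_gaussMap.iterate _) measurableSet_Ioc
  have hS : MeasurableSet (Ioc 0 ((k : ℝ) + 1)⁻¹ ∩ gaussMap ⁻¹' E) :=
    measurableSet_Ioc.inter (measurable_gaussMap hE)
  rw [cfSet_inter_cfSet_eq hm hmn, volume_Ioo_inter_irrational_inter]
  calc _ ≤ 2 * gaussMeasure (gaussMap^[m - 1] ⁻¹' (Ioc 0 ((k : ℝ) + 1)⁻¹ ∩ gaussMap ⁻¹' E)) :=
        volume_restrict_le_two_smul_gaussMeasure _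
    _ = 2 * gaussMeasure (Ioc 0 ((k : ℝ) + 1)⁻¹ ∩ gaussMap ⁻¹' E) := by
        rw [(measurePreserving_gaussMap.iterate _).measure_preimage hS.nullMeasurableSet]
    _ ≤ 2 * (ENNReal.ofReal ((k : ℝ) + 1)⁻¹ * volume.restrict (Ioc 0 1) E) := by
        gcongr
        exact gaussMeasure_Ioc_inter_preimage_le hE k
    _ ≤ 2 * (ENNReal.ofReal ((k : ℝ) + 1)⁻¹ * (2 * gaussMeasure A)) := by
        gcongr
        rw [← (measurePreserving_gaussMap.iterate _).measure_preimage
          measurableSet_Ioc.nullMeasurableSet]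
        exact volume_restrict_le_two_smul_gaussMeasure E
    _ ≤ 2 * (ENNReal.ofReal ((k : ℝ) + 1)⁻¹ * (2 * volume.restrict (Ioc 0 1) A)) := by
        gcongr
        exact gaussMeasure_le_volume_restrict
    _ = _ := by
        rw [volume_restrict_Ioc_inv]
        ring

/-- The sets `X_{n,n}` for odd `n` are pairwise almost independent with respect to
Lebesgue measure: there is `c > 1` with
`ℓ(X_{m,m} ∩ X_{n,n}) < c·ℓ(X_{m,m})·ℓ(X_{n,n})` for all odd `1 ≤ m < n`. -/
theorem cfSet_pairwise_almost_independent :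
    ∃ c : ℝ, 1 < c ∧ ∀ m n : ℕ, Odd m → Odd n → 1 ≤ m → m < n →
      volume (cfSet m m ∩ cfSet n n) <
        ENNReal.ofReal c * volume (cfSet m m) * volume (cfSet n n) := by
  refine ⟨17, by norm_num, fun m n _ _ hm hmn => ?_⟩
  have hXm := ofReal_inv_le_two_mul_volume_cfSet m m
  have hXn := ofReal_inv_le_two_mul_volume_cfSet n n
  have hne_zero := mul_ne_zero (volume_cfSet_ne_zero m m) (volume_cfSet_ne_zero n n)
  have hne_top := mul_ne_top (volume_cfSet_ne_top m m) (volume_cfSet_ne_top n n)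
  calc volume (cfSet m m ∩ cfSet n n)
      ≤ 4 * ENNReal.ofReal ((m : ℝ) + 1)⁻¹ * ENNReal.ofReal ((n : ℝ) + 1)⁻¹ :=
        volume_cfSet_inter_cfSet_le hm hmn m n
    _ ≤ 4 * (2 * volume (cfSet m m)) * (2 * volume (cfSet n n)) := by gcongr
    _ = volume (cfSet m m) * volume (cfSet n n) * 16 := by ring
    _ < volume (cfSet m m) * volume (cfSet n n) * 17 :=
        ENNReal.mul_lt_mul_right hne_zero hne_top (by norm_num)
    _ = ENNReal.ofReal 17 * volume (cfSet m m) * volume (cfSet n n) := by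
        rw [ENNReal.ofReal_ofNat]
        ring
end

section
/- Let z, x, y ∈ X and let γ be a geodesic from x to y. If p and q are points of the image of γ with d(z,p) = d(z,q) = dist(z, im γ) (i.e. both p and q are nearest points on γ to z), then d(p,q) ≤ 6δ. -/
/-- `γ` is a geodesic from `x` to `y`: an isometric map of `[0, dist x y]` into `X`
sending the endpoints to `x` and `y`. -/
def IsGeodesicSegment {X : Type*} [MetricSpace X] (x y : X) (γ : ℝ → X) : Prop :=
  γ 0 = x ∧ γ (dist x y) = y ∧
    ∀ s ∈ Set.Icc (0 : ℝ) (dist x y), ∀ t ∈ Set.Icc (0 : ℝ) (dist x y),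
      dist (γ s) (γ t) = |s - t|

/-- The image of a geodesic segment from `x` to `y`. -/
def geoIm {X : Type*} [MetricSpace X] (x y : X) (γ : ℝ → X) : Set X :=
  γ '' Set.Icc (0 : ℝ) (dist x y)

/-- `X` is a geodesic metric space: any two points are joined by a geodesic. -/
def GeodesicSpace (X : Type*) [MetricSpace X] : Prop :=
  ∀ x y : X, ∃ γ : ℝ → X, IsGeodesicSegment x y γ

/-- `X` is `δ`-hyperbolic: all geodesic triangles are `δ`-thin, i.e. for any three
points, any choice of geodesics between each pair, each side is contained in the
closed `δ`-neighbourhood of the union of the other two. -/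
def ThinTriangles (X : Type*) [MetricSpace X] (δ : ℝ) : Prop :=
  ∀ x y z : X, ∀ γ₁ γ₂ γ₃ : ℝ → X,
    IsGeodesicSegment x y γ₁ → IsGeodesicSegment y z γ₂ → IsGeodesicSegment x z γ₃ →
    ∀ p ∈ geoIm x y γ₁, ∃ q ∈ geoIm y z γ₂ ∪ geoIm x z γ₃, dist p q ≤ δ

/-- `p` is a nearest point to `z` in the set `A`. -/
def IsNearestPoint {X : Type*} [MetricSpace X] (z : X) (A : Set X) (p : X) : Prop :=
  p ∈ A ∧ ∀ w ∈ A, dist z p ≤ dist z w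

/-- The half-space `H(u,w)` of points at least as close to `w` as to `u`. -/
def halfSpace {X : Type*} [MetricSpace X] (u w : X) : Set X :=
  {a | dist w a ≤ dist u a}

private lemma aux_nearest {X : Type*} [MetricSpace X] (δ : ℝ) (hδ : 0 ≤ δ)
    (hgeo : GeodesicSpace X) (hthin : ThinTriangles X δ)
    (z x y : X) (γ : ℝ → X) (hγ : IsGeodesicSegment x y γ) (p q : X)
    (hp : IsNearestPoint z (geoIm x y γ) p) (hq : IsNearestPoint z (geoIm x y γ) q)
    (s t : ℝ) (hs : s ∈ Set.Icc (0:ℝ) (dist x y)) (ht : t ∈ Set.Icc (0:ℝ) (dist x y))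
    (hps : γ s = p) (hqt : γ t = q) (hst : s ≤ t) :
    dist p q ≤ 6 * δ := by
  obtain ⟨hγ0, hγD, hD⟩ := hγ
  have hdpq : dist p q = t - s := by
    rw [← hps, ← hqt, hD s hs t ht, abs_sub_comm, abs_of_nonneg (by linarith)]
  -- the restriction of γ to [s,t] is a geodesic from p to q
  set γ' : ℝ → X := fun u => γ (s + u) with hγ'def
  have hmem : ∀ u ∈ Set.Icc (0:ℝ) (dist p q), s + u ∈ Set.Icc (0:ℝ) (dist x y) := by
    intro u hu
    rw [hdpq] at hu
    exact ⟨by linarith [hs.1, hu.1], by linarith [ht.2, hu.2]⟩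
  have hγ' : IsGeodesicSegment p q γ' := by
    refine ⟨by show γ (s + 0) = p; rw [add_zero, hps], ?_, ?_⟩
    · have h1 : s + dist p q = t := by rw [hdpq]; ring
      simpa [hγ'def, h1] using hqt
    · intro u hu v hv
      have := hD (s + u) (hmem u hu) (s + v) (hmem v hv)
      simpa [hγ'def, add_sub_add_left_eq_sub] using this
  obtain ⟨γ₂, hγ₂⟩ := hgeo q z
  obtain ⟨γ₃, hγ₃⟩ := hgeo p z
  -- midpoint of p and q on γ
  have hmid : (t - s) / 2 ∈ Set.Icc (0:ℝ) (dist p q) := by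
    rw [hdpq]; constructor <;> linarith
  set m : X := γ' ((t - s) / 2) with hmdef
  have hmIm' : m ∈ geoIm p q γ' := ⟨(t - s) / 2, hmid, rfl⟩
  have hmIm : m ∈ geoIm x y γ := ⟨s + (t - s) / 2, hmem _ hmid, rfl⟩
  have hzm : dist z p ≤ dist z m := hp.2 m hmIm
  have hzpq : dist z p = dist z q := le_antisymm (hp.2 q hq.1) (hq.2 p hp.1)
  have hqm : dist q m = (t - s) / 2 := by
    have h := hD t ht (s + (t - s) / 2) (hmem _ hmid)
    rw [hqt] at h
    rw [hmdef, hγ'def]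
    simp only []
    rw [h, abs_of_nonneg (by linarith)]
    ring
  have hpm : dist p m = (t - s) / 2 := by
    have h := hD s hs (s + (t - s) / 2) (hmem _ hmid)
    rw [hps] at h
    rw [hmdef, hγ'def]
    simp only []
    rw [h, abs_sub_comm, abs_of_nonneg (by linarith)]
    ring
  obtain ⟨w, hw, hmw⟩ := hthin p q z γ' γ₂ γ₃ hγ' hγ₂ hγ₃ m hmIm'
  cases hw with
  | inl hw =>
      -- w on the geodesic from q to z
      obtain ⟨u, hu, rfl⟩ := hw
      obtain ⟨h20, h2D, h2⟩ := hγ₂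
      have hqw : dist q (γ₂ u) = u := by
        have h := h2 0 ⟨le_refl 0, dist_nonneg⟩ u hu
        rw [h20] at h
        rw [h, zero_sub, abs_neg, abs_of_nonneg hu.1]
      have hwz : dist (γ₂ u) z = dist q z - u := by
        have h := h2 u hu (dist q z) ⟨dist_nonneg, le_refl _⟩
        rw [h2D] at h
        rw [h, abs_of_nonpos (by linarith [hu.2])]
        ring
      -- dist z p ≤ dist z m ≤ dist z w + dist w m
      have h1 : dist z m ≤ dist z (γ₂ u) + dist (γ₂ u) m := dist_triangle _ _ _
      have h2' : dist z (γ₂ u) = dist q z - u := by rw [dist_comm]; exact hwz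
      have h3 : dist (γ₂ u) m ≤ δ := by rw [dist_comm]; exact hmw
      have hu_le : u ≤ δ := by
        have : dist q z = dist z p := by rw [dist_comm]; exact hzpq.symm
        linarith [hzm]
      have h4 : dist q m ≤ dist q (γ₂ u) + dist (γ₂ u) m := dist_triangle _ _ _
      have : (t - s) / 2 ≤ 2 * δ := by rw [← hqm]; linarith
      linarith [hdpq]
  | inr hw =>
      -- w on the geodesic from p to z
      obtain ⟨u, hu, rfl⟩ := hw
      obtain ⟨h30, h3D, h3⟩ := hγ₃
      have hpw : dist p (γ₃ u) = u := by
        have h := h3 0 ⟨le_refl 0, dist_nonneg⟩ u hu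
        rw [h30] at h
        rw [h, zero_sub, abs_neg, abs_of_nonneg hu.1]
      have hwz : dist (γ₃ u) z = dist p z - u := by
        have h := h3 u hu (dist p z) ⟨dist_nonneg, le_refl _⟩
        rw [h3D] at h
        rw [h, abs_of_nonpos (by linarith [hu.2])]
        ring
      have h1 : dist z m ≤ dist z (γ₃ u) + dist (γ₃ u) m := dist_triangle _ _ _
      have h2' : dist z (γ₃ u) = dist p z - u := by rw [dist_comm]; exact hwz
      have h3' : dist (γ₃ u) m ≤ δ := by rw [dist_comm]; exact hmw
      have hu_le : u ≤ δ := by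
        have : dist p z = dist z p := dist_comm _ _
        linarith [hzm]
      have h4 : dist p m ≤ dist p (γ₃ u) + dist (γ₃ u) m := dist_triangle _ _ _
      have : (t - s) / 2 ≤ 2 * δ := by rw [← hpm]; linarith
      linarith [hdpq]

/-- If `p` and `q` are both nearest points on a geodesic `[x,y]` to `z`,
then `d(p,q) ≤ 6δ`. -/
theorem nearest_points_close {X : Type*} [MetricSpace X] (δ : ℝ) (hδ : 0 ≤ δ)
    (hgeo : GeodesicSpace X) (hthin : ThinTriangles X δ)
    (z x y : X) (γ : ℝ → X) (hγ : IsGeodesicSegment x y γ) (p q : X)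
    (hp : IsNearestPoint z (geoIm x y γ) p) (hq : IsNearestPoint z (geoIm x y γ) q) :
    dist p q ≤ 6 * δ := by
  obtain ⟨s, hs, hps⟩ := hp.1
  obtain ⟨t, ht, hqt⟩ := hq.1
  rcases le_total s t with hst | hst
  · exact aux_nearest δ hδ hgeo hthin z x y γ hγ p q hp hq s t hs ht hps hqt hst
  · rw [dist_comm]
    exact aux_nearest δ hδ hgeo hthin z x y γ hγ q p hq hp t s ht hs hqt hps hst
end

section
/- Let a, b, x, y ∈ X, let γ be a geodesic from x to y, let p be a point of the image of γ nearest to a, and let q be a point of the image of γ nearest to b. If d(p,q) > 14δ, then d(a,b) ≥ d(a,p) + d(p,q) + d(q,b) − 24δ. -/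
lemma geo_dists {X : Type*} [MetricSpace X] {u v : X} {η : ℝ → X}
    (h : IsGeodesicSegment u v η) {r : ℝ} (hr : r ∈ Set.Icc (0:ℝ) (dist u v)) :
    dist u (η r) = r ∧ dist (η r) v = dist u v - r := by
  obtain ⟨h0, hD, hd⟩ := h
  have h1 := hd 0 ⟨le_refl 0, dist_nonneg⟩ r hr
  have h2 := hd r hr (dist u v) ⟨dist_nonneg, le_refl _⟩
  rw [h0] at h1
  rw [hD] at h2
  constructor
  · rw [h1, zero_sub, abs_neg, abs_of_nonneg hr.1]
  · rw [h2, abs_of_nonpos (sub_nonpos.2 hr.2), neg_sub]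

lemma sub_geodesic {X : Type*} [MetricSpace X] {x y : X} {γ : ℝ → X}
    (hγ : IsGeodesicSegment x y γ) {s t : ℝ}
    (hs : s ∈ Set.Icc (0:ℝ) (dist x y)) (ht : t ∈ Set.Icc (0:ℝ) (dist x y)) :
    ∃ γ' : ℝ → X, IsGeodesicSegment (γ s) (γ t) γ' ∧
      ∀ r ∈ Set.Icc (0:ℝ) (dist (γ s) (γ t)), γ' r ∈ geoIm x y γ := by
  obtain ⟨h0, hD, hd⟩ := hγ
  have hst : dist (γ s) (γ t) = |s - t| := hd s hs t ht
  rcases le_total s t with h | h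
  · have hst' : dist (γ s) (γ t) = t - s := by
      rw [hst, abs_of_nonpos (sub_nonpos.2 h), neg_sub]
    refine ⟨fun r => γ (s + r), ⟨by simp, ?_, ?_⟩, ?_⟩
    · rw [hst']; norm_num
    · intro r₁ hr₁ r₂ hr₂
      rw [hst'] at hr₁ hr₂
      have := hd (s + r₁) ⟨by linarith [hr₁.1, hs.1], by linarith [hr₁.2, ht.2]⟩
        (s + r₂) ⟨by linarith [hr₂.1, hs.1], by linarith [hr₂.2, ht.2]⟩
      rw [this]; ring_nf
    · intro r hr
      rw [hst'] at hr
      exact ⟨s + r, ⟨by linarith [hr.1, hs.1], by linarith [hr.2, ht.2]⟩, rfl⟩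
  · have hst' : dist (γ s) (γ t) = s - t := by
      rw [hst, abs_of_nonneg (sub_nonneg.2 h)]
    refine ⟨fun r => γ (s - r), ⟨by simp, ?_, ?_⟩, ?_⟩
    · rw [hst']; norm_num
    · intro r₁ hr₁ r₂ hr₂
      rw [hst'] at hr₁ hr₂
      have := hd (s - r₁) ⟨by linarith [hr₁.2, ht.1], by linarith [hr₁.1, hs.2]⟩
        (s - r₂) ⟨by linarith [hr₂.2, ht.1], by linarith [hr₂.1, hs.2]⟩
      rw [this]
      rw [show s - r₁ - (s - r₂) = -(r₁ - r₂) by ring, abs_neg]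
    · intro r hr
      rw [hst'] at hr
      exact ⟨s - r, ⟨by linarith [hr.2, ht.1], by linarith [hr.1, hs.2]⟩, rfl⟩

lemma nearest_proj_ineq {X : Type*} [MetricSpace X] {δ : ℝ} (hδ : 0 ≤ δ)
    (hgeo : GeodesicSpace X) (hthin : ThinTriangles X δ)
    {a x y : X} {γ : ℝ → X} (hγ : IsGeodesicSegment x y γ) {p z : X}
    (hp : IsNearestPoint a (geoIm x y γ) p) (hz : z ∈ geoIm x y γ) :
    dist a p + dist p z ≤ dist a z + 4 * δ := by
  have hap : dist a p ≤ dist a z := hp.2 z hz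
  rcases le_or_gt (dist p z) (4*δ) with h4 | h4
  · linarith
  obtain ⟨s, hs, hps⟩ := hp.1
  obtain ⟨t, ht, hzt⟩ := hz
  obtain ⟨γ', hγ', hγim⟩ := sub_geodesic hγ hs ht
  rw [hps, hzt] at hγ' hγim
  apply le_of_forall_pos_le_add
  intro ε hε
  set D := dist p z with hDdef
  set ε' := min ε ((D - 2*δ)/2) with hε'def
  have hε'0 : 0 < ε' := lt_min hε (by linarith)
  have hε'ε : ε' ≤ ε := min_le_left _ _
  have hε'D : 2*δ + ε' ≤ D := by
    have := min_le_right ε ((D - 2*δ)/2); linarith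
  have hr : 2*δ + ε' ∈ Set.Icc (0:ℝ) D := ⟨by linarith, hε'D⟩
  have hw := geo_dists hγ' hr
  set w := γ' (2*δ + ε') with hwdef
  have hwim : w ∈ geoIm x y γ := hγim _ hr
  obtain ⟨ζ, hζ⟩ := hgeo z a
  obtain ⟨π, hπ⟩ := hgeo p a
  obtain ⟨u, hu, hdu⟩ := hthin p z a γ' ζ π hγ' hζ hπ w ⟨2*δ + ε', hr, rfl⟩
  have hapw : dist a p ≤ dist a w := hp.2 w hwim
  rcases hu with hu | hu
  · -- u on geodesic from z to a
    obtain ⟨r₂, hr₂, rfl⟩ := hu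
    have h2 := geo_dists hζ hr₂
    have t1 : dist a w ≤ dist a (ζ r₂) + dist (ζ r₂) w := dist_triangle _ _ _
    have t2 : dist w z ≤ dist w (ζ r₂) + dist (ζ r₂) z := dist_triangle _ _ _
    have e1 : dist (ζ r₂) w = dist w (ζ r₂) := dist_comm _ _
    have e2 : dist a (ζ r₂) = dist (ζ r₂) a := dist_comm _ _
    have e3 : dist (ζ r₂) z = dist z (ζ r₂) := dist_comm _ _
    have e4 : dist a z = dist z a := dist_comm _ _
    -- h2.1 : dist z (ζ r₂) = r₂, h2.2 : dist (ζ r₂) a = dist z a - r₂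
    linarith [hw.2, h2.1, h2.2]
  · -- u on geodesic from p to a
    obtain ⟨r₂, hr₂, rfl⟩ := hu
    have h2 := geo_dists hπ hr₂
    have t1 : dist a w ≤ dist a (π r₂) + dist (π r₂) w := dist_triangle _ _ _
    have t2 : dist p w ≤ dist p (π r₂) + dist (π r₂) w := dist_triangle _ _ _
    have e1 : dist (π r₂) w = dist w (π r₂) := dist_comm _ _
    have e2 : dist a (π r₂) = dist (π r₂) a := dist_comm _ _
    have e3 : dist a p = dist p a := dist_comm _ _
    -- h2.1 : dist p (π r₂) = r₂, h2.2 : dist (π r₂) a = dist p a - r₂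
    -- hw.1 : dist p w = 2δ + ε'
    linarith [hw.1, h2.1, h2.2]

/-- Maher's Proposition 3.4: if `p` is a closest point on `[x,y]` to `a`, `q` a closest
point on `[x,y]` to `b`, and `d(p,q) > 14δ`, then
`d(a,b) ≥ d(a,p) + d(p,q) + d(q,b) − 24δ`. -/
theorem dist_ge_of_far_projections {X : Type*} [MetricSpace X] (δ : ℝ) (hδ : 0 ≤ δ)
    (hgeo : GeodesicSpace X) (hthin : ThinTriangles X δ)
    (a b x y : X) (γ : ℝ → X) (hγ : IsGeodesicSegment x y γ) (p q : X)
    (hp : IsNearestPoint a (geoIm x y γ) p) (hq : IsNearestPoint b (geoIm x y γ) q)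
    (hpq : 14 * δ < dist p q) :
    dist a p + dist p q + dist q b - 24 * δ ≤ dist a b := by
  obtain ⟨s, hs, hps⟩ := hp.1
  obtain ⟨t, ht, hqt⟩ := hq.1
  obtain ⟨γ', hγ', hγim⟩ := sub_geodesic hγ hs ht
  rw [hps, hqt] at hγ' hγim
  set D := dist p q with hDdef
  have hm : D/2 ∈ Set.Icc (0:ℝ) D := ⟨by linarith, by linarith⟩
  have hmd := geo_dists hγ' hm
  set m := γ' (D/2) with hmdef
  have hmim : m ∈ geoIm x y γ := hγim _ hm
  obtain ⟨α, hα⟩ := hgeo q a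
  obtain ⟨π, hπ⟩ := hgeo p a
  obtain ⟨u, hu, hmu⟩ := hthin p q a γ' α π hγ' hα hπ m ⟨D/2, hm, rfl⟩
  rcases hu with hu | hu
  · -- u on geodesic α from q to a : second triangle q a b
    obtain ⟨r₂, hr₂, hur⟩ := hu
    obtain ⟨η, hη⟩ := hgeo a b
    obtain ⟨β, hβ⟩ := hgeo q b
    obtain ⟨v, hv, huv⟩ := hthin q a b α η β hα hη hβ u ⟨r₂, hr₂, hur⟩
    have hmv : dist m v ≤ 2*δ := by
      calc dist m v ≤ dist m u + dist u v := dist_triangle _ _ _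
        _ ≤ 2*δ := by linarith
    rcases hv with hv | hv
    · -- v on geodesic η from a to b : conclude
      obtain ⟨r₃, hr₃, rfl⟩ := hv
      have h3 := geo_dists hη hr₃
      -- h3.1 : dist a v = r₃, h3.2 : dist v b = dist a b - r₃
      have t1 : dist a m ≤ dist a (η r₃) + dist (η r₃) m := dist_triangle _ _ _
      have t2 : dist m b ≤ dist m (η r₃) + dist (η r₃) b := dist_triangle _ _ _
      have e1 : dist (η r₃) m = dist m (η r₃) := dist_comm _ _
      have n1 : dist a p + dist p m ≤ dist a m + 4*δ :=
        nearest_proj_ineq hδ hgeo hthin hγ hp hmim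
      have n2 : dist b q + dist q m ≤ dist b m + 4*δ :=
        nearest_proj_ineq hδ hgeo hthin hγ hq hmim
      have e2 : dist q m = dist m q := dist_comm _ _
      have e3 : dist b q = dist q b := dist_comm _ _
      have e4 : dist b m = dist m b := dist_comm _ _
      -- hmd.1 : dist p m = D/2, hmd.2 : dist m q = D - D/2
      linarith [hmd.1, hmd.2, h3.1, h3.2]
    · -- v on geodesic β from q to b : contradiction
      exfalso
      obtain ⟨r₃, hr₃, rfl⟩ := hv
      have h3 := geo_dists hβ hr₃
      -- h3.1 : dist q v = r₃, h3.2 : dist v b = dist q b - r₃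
      have hbq : dist b q ≤ dist b m := hq.2 m hmim
      have t1 : dist b m ≤ dist b (β r₃) + dist (β r₃) m := dist_triangle _ _ _
      have t2 : dist q m ≤ dist q (β r₃) + dist (β r₃) m := dist_triangle _ _ _
      have e1 : dist (β r₃) m = dist m (β r₃) := dist_comm _ _
      have e2 : dist b (β r₃) = dist (β r₃) b := dist_comm _ _
      have e3 : dist b q = dist q b := dist_comm _ _
      have e4 : dist q m = dist m q := dist_comm _ _
      linarith [hmd.2, h3.1, h3.2, hmv]
  · -- u on geodesic π from p to a : contradiction
    exfalso
    obtain ⟨r₂, hr₂, rfl⟩ := hu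
    have h2 := geo_dists hπ hr₂
    have hap : dist a p ≤ dist a m := hp.2 m hmim
    have t1 : dist a m ≤ dist a (π r₂) + dist (π r₂) m := dist_triangle _ _ _
    have t2 : dist p m ≤ dist p (π r₂) + dist (π r₂) m := dist_triangle _ _ _
    have e1 : dist (π r₂) m = dist m (π r₂) := dist_comm _ _
    have e2 : dist a (π r₂) = dist (π r₂) a := dist_comm _ _
    have e3 : dist a p = dist p a := dist_comm _ _
    linarith [hmd.1, h2.1, h2.2]
end
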